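/- arXiv:2110.12368 — 2 statements merged into one kernel-verified Lean document; each statement's English description precedes it below -/
import Mathlib

section
/- The complete graph K_n with n ≥ 3 has no multiresolving set. -/
open SimpleGraph

section Defs

variable {V : Type*}

/-- Multirepresentation of a vertex: the multiset of distances to the vertices of `W`. -/
noncomputable def multirep (G : SimpleGraph V) (W : Finset V) (v : V) : Multiset ℕ :=
  W.val.map fun w => G.dist v w

/-- `W` is a multiresolving set: distinct vertices have distinct multirepresentations. -/
def IsMultiResolving (G : SimpleGraph V) (W : Finset V) : Prop :=
  Function.Injective (multirep G W)

/-- Multiset dimension: minimum cardinality of a multiresolving set. -/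
noncomputable def msdim (G : SimpleGraph V) : ℕ :=
  sInf {n | ∃ W : Finset V, W.card = n ∧ IsMultiResolving G W}

/-- `W` is a (metric) resolving set. -/
def IsResolving (G : SimpleGraph V) (W : Finset V) : Prop :=
  ∀ u v : V, (∀ w ∈ W, G.dist u w = G.dist v w) → u = v

/-- Metric dimension. -/
noncomputable def gdim (G : SimpleGraph V) : ℕ :=
  sInf {n | ∃ W : Finset V, W.card = n ∧ IsResolving G W}

/-- Distance from a vertex to an edge: minimum of distances to its endpoints. -/
noncomputable def edist (G : SimpleGraph V) (v : V) (e : Sym2 V) : ℕ :=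
  Sym2.lift ⟨fun a b => min (G.dist v a) (G.dist v b), fun a b => min_comm _ _⟩ e

/-- `U` is an edge metric generator. -/
def IsEdgeResolving (G : SimpleGraph V) (U : Finset V) : Prop :=
  ∀ e f : ↥G.edgeSet, (∀ u ∈ U, edist G u e.1 = edist G u f.1) → e = f

/-- Edge metric dimension. -/
noncomputable def edim (G : SimpleGraph V) : ℕ :=
  sInf {n | ∃ U : Finset V, U.card = n ∧ IsEdgeResolving G U}

/-- Distance from an element of `V ∪ E` to a vertex. -/
noncomputable def mixedDist (G : SimpleGraph V) (x : V ⊕ ↥G.edgeSet) (u : V) : ℕ :=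
  match x with
  | Sum.inl v => G.dist u v
  | Sum.inr e => edist G u e.1

/-- `U` is a mixed metric generator: distinct elements of `V ∪ E` are distinguished
by the distance to some vertex of `U`. -/
def IsMixedGenerator (G : SimpleGraph V) (U : Finset V) : Prop :=
  ∀ x y : V ⊕ ↥G.edgeSet, (∀ u ∈ U, mixedDist G x u = mixedDist G y u) → x = y

/-- Mixed metric dimension. -/
noncomputable def mdim (G : SimpleGraph V) : ℕ :=
  sInf {n | ∃ U : Finset V, U.card = n ∧ IsMixedGenerator G U}

end Defs

/-! In a complete graph every vertex is at distance `0` from itself and `1` from all others, so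
the multirepresentation of `v` is `{0, 1, …, 1}` if `v ∈ W` and `{1, …, 1}` otherwise. It thus
only records whether `v ∈ W`, and can separate at most two vertices. -/

namespace SimpleGraph

variable {V : Type*}

theorem multirep_completeGraph_of_mem {W : Finset V} {v : V} (hv : v ∈ W) :
    multirep (completeGraph V) W v = 0 ::ₘ Multiset.replicate (W.card - 1) 1 := by
  classical
  rw [multirep, ← Multiset.cons_erase hv, Multiset.map_cons, dist_self, Multiset.map_congr rfl
    fun w hw => dist_top_of_ne (W.nodup.mem_erase_iff.1 hw).1.symm]
  simp [Multiset.map_const', Multiset.card_erase_of_mem hv]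

theorem multirep_completeGraph_of_notMem {W : Finset V} {v : V} (hv : v ∉ W) :
    multirep (completeGraph V) W v = Multiset.replicate W.card 1 := by
  rw [multirep,
    Multiset.map_congr rfl fun w hw => dist_top_of_ne (ne_of_mem_of_not_mem hw hv).symm,
    Multiset.map_const', Finset.card_val]

theorem IsMultiResolving.injective_mem_completeGraph {W : Finset V}
    (hW : IsMultiResolving (completeGraph V) W) : Function.Injective (· ∈ W) := by
  intro u v huv
  replace huv : u ∈ W ↔ v ∈ W := Iff.of_eq huv
  apply hW
  by_cases hu : u ∈ W
  · have hv : v ∈ W := huv.1 hu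
    rw [multirep_completeGraph_of_mem hu, multirep_completeGraph_of_mem hv]
  · have hv : v ∉ W := mt huv.2 hu
    rw [multirep_completeGraph_of_notMem hu, multirep_completeGraph_of_notMem hv]

theorem IsMultiResolving.card_le_two_of_completeGraph [Fintype V] {W : Finset V}
    (hW : IsMultiResolving (completeGraph V) W) : Fintype.card V ≤ 2 :=
  Fintype.card_prop ▸ Fintype.card_le_of_injective _ hW.injective_mem_completeGraph

end SimpleGraph

/-- the complete graph `K_n`, `n ≥ 3`, has no multiresolving set. -/
theorem completeGraph_no_multiResolving (n : ℕ) (hn : 3 ≤ n) :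
    ∀ W : Finset (Fin n), ¬ IsMultiResolving (completeGraph (Fin n)) W := by
  intro W hW
  have := hW.card_le_two_of_completeGraph
  rw [Fintype.card_fin] at this
  omega
end

section
/- For a,b,c ≥ 3, the multiset dimension of the starphene graph SP_{a,b,c} equals 3. -/
/-!
The lower bound holds in every graph of minimum degree at least two, such as `SP_{a,b,c}`:
a pair `{x, y}` never multiresolves, since `x` and `y` both see the multiset `{0, d(x, y)}`,
and a singleton `{w}` cannot separate two neighbours of `w`.

For the upper bound take the two tips of the `p`-arm and the central vertex `r1 0`. The
distances to these three vertices are explicit piecewise linear functions of the position,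
identified as graph distances because each is `1`-Lipschitz along edges, vanishes at its base
vertex and drops by one along some edge at every other vertex. Equality of two
multisets of three such values forces equality of the vertices by linear arithmetic.
-/

open SimpleGraph

section Starphene

/-- Vertices of the starphene `SP_{a,b,c}` (0-based indices: paper index `g` ↦ `g-1`). -/
inductive SPVert (a b c : ℕ) where
  | p1 (g : Fin (2*b-1)) | p2 (g : Fin (2*b-1))
  | q1 (g : Fin (2*c-1)) | q2 (g : Fin (2*c-1))
  | r1 (g : Fin (2*a-1)) | r2 (g : Fin (2*a-1))
  deriving DecidableEq, Fintype

/-- Base adjacency of the starphene: path edges along each family, rung edges at odd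
(paper) indices, and the three central edges. -/
def SPAdjB {a b c : ℕ} : SPVert a b c → SPVert a b c → Bool
  | .p1 g, .p1 h => h.val == g.val + 1
  | .p2 g, .p2 h => h.val == g.val + 1
  | .q1 g, .q1 h => h.val == g.val + 1
  | .q2 g, .q2 h => h.val == g.val + 1
  | .r1 g, .r1 h => h.val == g.val + 1
  | .r2 g, .r2 h => h.val == g.val + 1
  | .p1 g, .p2 h => g.val == h.val && g.val % 2 == 0
  | .q1 g, .q2 h => g.val == h.val && g.val % 2 == 0
  | .r1 g, .r2 h => g.val == h.val && g.val % 2 == 0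
  | .p1 g, .r2 h => g.val == 0 && h.val == 0
  | .r1 g, .q2 h => g.val == 0 && h.val == 0
  | .q1 g, .p2 h => g.val == 0 && h.val == 0
  | _, _ => false

/-- The starphene graph `SP_{a,b,c}`. -/
def SP (a b c : ℕ) : SimpleGraph (SPVert a b c) :=
  SimpleGraph.fromRel (fun x y => SPAdjB x y = true)

instance (a b c : ℕ) : DecidableRel (SP a b c).Adj :=
  fun x y => decidable_of_iff _ (SimpleGraph.fromRel_adj _ x y).symm

end Starphene

theorem Multiset.cons_cons_singleton_eq_iff {α : Type*} {x₁ x₂ x₃ y₁ y₂ y₃ : α} :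
    x₁ ::ₘ x₂ ::ₘ {x₃} = y₁ ::ₘ y₂ ::ₘ {y₃} ↔
      x₁ = y₁ ∧ x₂ = y₂ ∧ x₃ = y₃ ∨ x₁ = y₁ ∧ x₂ = y₃ ∧ x₃ = y₂ ∨
      x₁ = y₂ ∧ x₂ = y₁ ∧ x₃ = y₃ ∨ x₁ = y₂ ∧ x₂ = y₃ ∧ x₃ = y₁ ∨
      x₁ = y₃ ∧ x₂ = y₁ ∧ x₃ = y₂ ∨ x₁ = y₃ ∧ x₂ = y₂ ∧ x₃ = y₁ := by
  change (([x₁, x₂, x₃] : List α) : Multiset α) = ([y₁, y₂, y₃] : List α) ↔ _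
  rw [Multiset.coe_eq_coe, ← List.mem_permutations]
  simp only [List.permutations, List.permutationsAux, List.foldr_cons, List.permutationsAux.rec,
    List.foldr_nil, List.permutationsAux2_snd_nil, List.permutationsAux2_snd_cons, List.append_nil,
    id_eq, List.cons_append, List.nil_append, List.mem_cons, List.cons.injEq, and_true,
    List.not_mem_nil, or_false]
  tauto

theorem SimpleGraph.dist_eq_of_potential {V : Type*} (G : SimpleGraph V) {w : V} {D : V → ℕ}
    (h0 : D w = 0) (hlip : ∀ x y, G.Adj x y → D x ≤ D y + 1)
    (hdesc : ∀ v, v ≠ w → ∃ y, G.Adj v y ∧ D y + 1 = D v) (v : V) :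
    G.dist v w = D v := by
  have walk_of_potential : ∀ n v, D v = n → ∃ p : G.Walk v w, p.length = n := by
    intro n
    induction n with
    | zero =>
      intro v hv
      obtain rfl : v = w := by
        by_contra hne
        obtain ⟨y, -, hy⟩ := hdesc v hne
        omega
      exact ⟨.nil, rfl⟩
    | succ n ih =>
      intro v hv
      obtain ⟨y, hadj, hy⟩ := hdesc v (by rintro rfl; omega)
      obtain ⟨p, hp⟩ := ih y (by omega)
      exact ⟨.cons hadj p, by simp [hp]⟩
  have potential_le_length : ∀ x y (p : G.Walk x y), D x ≤ D y + p.length := by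
    intro x y p
    induction p with
    | nil => simp
    | cons hadj p ih => have := hlip _ _ hadj; simp only [Walk.length_cons]; omega
  obtain ⟨p, hp⟩ := walk_of_potential _ v rfl
  obtain ⟨q, hq⟩ := Reachable.exists_walk_length_eq_dist ⟨p⟩
  have := potential_le_length v w q
  have := dist_le p
  omega

section MultisetDimension

variable {V : Type*} (G : SimpleGraph V)

theorem multirep_insert [DecidableEq V] {W : Finset V} {w : V} (hw : w ∉ W) (v : V) :
    multirep G (insert w W) v = G.dist v w ::ₘ multirep G W v := by
  simp [multirep, Finset.insert_val_of_notMem hw]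

theorem multirep_singleton (w v : V) : multirep G {w} v = {G.dist v w} := rfl

theorem not_isMultiResolving_empty {x y : V} (hxy : x ≠ y) : ¬IsMultiResolving G ∅ :=
  fun h => hxy (h rfl)

theorem not_isMultiResolving_singleton {w x y : V} (hxy : x ≠ y) (hx : G.Adj w x)
    (hy : G.Adj w y) : ¬IsMultiResolving G {w} := by
  refine fun h => hxy (h ?_)
  simp only [multirep_singleton, dist_comm (v := w), dist_eq_one_iff_adj.mpr hx,
    dist_eq_one_iff_adj.mpr hy]

theorem not_isMultiResolving_pair [DecidableEq V] {x y : V} (hxy : x ≠ y) :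
    ¬IsMultiResolving G {x, y} := by
  refine fun h => hxy (h ?_)
  simp only [multirep_insert G (Finset.notMem_singleton.mpr hxy), multirep_singleton,
    SimpleGraph.dist_self, dist_comm (u := y)]
  exact Multiset.cons_swap _ _ _

theorem three_le_card_of_isMultiResolving [Nonempty V]
    (hG : ∀ v, ∃ x y, x ≠ y ∧ G.Adj v x ∧ G.Adj v y) {W : Finset V}
    (hW : IsMultiResolving G W) : 3 ≤ W.card := by
  classical
  by_contra! hlt
  interval_cases hcard : W.card
  · obtain ⟨x, y, hxy, -⟩ := hG (Classical.arbitrary V)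
    exact not_isMultiResolving_empty G hxy (Finset.card_eq_zero.mp hcard ▸ hW)
  · obtain ⟨w, rfl⟩ := Finset.card_eq_one.mp hcard
    obtain ⟨x, y, hxy, hx, hy⟩ := hG w
    exact not_isMultiResolving_singleton G hxy hx hy hW
  · obtain ⟨x, y, hxy, rfl⟩ := Finset.card_eq_two.mp hcard
    exact not_isMultiResolving_pair G hxy hW

theorem msdim_eq {n : ℕ} {W : Finset V} (hW : IsMultiResolving G W) (hcard : W.card = n)
    (hmin : ∀ U, IsMultiResolving G U → n ≤ U.card) : msdim G = n :=
  le_antisymm (Nat.sInf_le ⟨W, hcard, hW⟩)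
    (le_csInf ⟨n, W, hcard, hW⟩ fun _ ⟨U, hU, hUres⟩ => hU ▸ hmin U hUres)

end MultisetDimension

namespace SP
variable {a b c : ℕ}

theorem adj_iff {x y : SPVert a b c} : (SP a b c).Adj x y ↔ SPAdjB x y ∨ SPAdjB y x := by
  rw [SP, fromRel_adj, and_iff_right_iff_imp]
  rintro h rfl
  cases x <;> simp [SPAdjB] at h

def tip₁ (hb : 0 < b) : SPVert a b c := .p1 ⟨2 * b - 2, by omega⟩
def tip₂ (hb : 0 < b) : SPVert a b c := .p2 ⟨2 * b - 2, by omega⟩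
def hub (ha : 0 < a) : SPVert a b c := .r1 ⟨0, by omega⟩

def distTip₁ : SPVert a b c → ℕ
  | .p1 g => 2 * b - 2 - g
  | .p2 g => 2 * b - 1 - g
  | .q1 g => 2 * b + g
  | .q2 g => 2 * b + 1 + g
  | .r1 g => 2 * b + g
  | .r2 g => 2 * b - 1 + g

def distTip₂ : SPVert a b c → ℕ
  | .p1 g => 2 * b - 1 - g
  | .p2 g => 2 * b - 2 - g
  | .q1 g => 2 * b - 1 + g
  | .q2 g => 2 * b + g
  | .r1 g => 2 * b + 1 + g
  | .r2 g => 2 * b + g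

def distHub : SPVert a b c → ℕ
  | .p1 g => g + 2
  | .p2 g => g + 3
  | .q1 g => g + 2
  | .q2 g => g + 1
  | .r1 g => g
  | .r2 g => g + 1

theorem distTip₁_le_of_adj {x y : SPVert a b c} (h : (SP a b c).Adj x y) :
    distTip₁ x ≤ distTip₁ y + 1 := by
  rw [adj_iff] at h
  cases x <;> cases y <;> simp [SPAdjB, distTip₁] at h ⊢ <;> omega

theorem distTip₂_le_of_adj {x y : SPVert a b c} (h : (SP a b c).Adj x y) :
    distTip₂ x ≤ distTip₂ y + 1 := by
  rw [adj_iff] at h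
  cases x <;> cases y <;> simp [SPAdjB, distTip₂] at h ⊢ <;> omega

theorem distHub_le_of_adj {x y : SPVert a b c} (h : (SP a b c).Adj x y) :
    distHub x ≤ distHub y + 1 := by
  rw [adj_iff] at h
  cases x <;> cases y <;> simp [SPAdjB, distHub] at h ⊢ <;> omega

theorem exists_adj_distTip₁_succ (hb : 0 < b) (v : SPVert a b c) (hv : v ≠ tip₁ hb) :
    ∃ y, (SP a b c).Adj v y ∧ distTip₁ y + 1 = distTip₁ v := by
  rcases v with ⟨g, hg⟩ | ⟨g, hg⟩ | ⟨_ | g, hg⟩ | ⟨_ | g, hg⟩ | ⟨_ | g, hg⟩ | ⟨_ | g, hg⟩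
  · have : g + 1 < 2 * b - 1 := by simp [tip₁] at hv; omega
    refine ⟨.p1 ⟨g + 1, this⟩, ?_, ?_⟩ <;> grind [adj_iff, SPAdjB, distTip₁]
  · by_cases hg' : g + 1 < 2 * b - 1
    · refine ⟨.p2 ⟨g + 1, hg'⟩, ?_, ?_⟩ <;> grind [adj_iff, SPAdjB, distTip₁]
    · refine ⟨.p1 ⟨g, hg⟩, ?_, ?_⟩ <;> grind [adj_iff, SPAdjB, distTip₁]
  · refine ⟨.p2 ⟨0, by omega⟩, ?_, ?_⟩ <;> grind [adj_iff, SPAdjB, distTip₁]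
  · refine ⟨.q1 ⟨g, by omega⟩, ?_, ?_⟩ <;> grind [adj_iff, SPAdjB, distTip₁]
  · refine ⟨.q1 ⟨0, hg⟩, ?_, ?_⟩ <;> grind [adj_iff, SPAdjB, distTip₁]
  · refine ⟨.q2 ⟨g, by omega⟩, ?_, ?_⟩ <;> grind [adj_iff, SPAdjB, distTip₁]
  · refine ⟨.r2 ⟨0, hg⟩, ?_, ?_⟩ <;> grind [adj_iff, SPAdjB, distTip₁]
  · refine ⟨.r1 ⟨g, by omega⟩, ?_, ?_⟩ <;> grind [adj_iff, SPAdjB, distTip₁]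
  · refine ⟨.p1 ⟨0, by omega⟩, ?_, ?_⟩ <;> grind [adj_iff, SPAdjB, distTip₁]
  · refine ⟨.r2 ⟨g, by omega⟩, ?_, ?_⟩ <;> grind [adj_iff, SPAdjB, distTip₁]

theorem exists_adj_distTip₂_succ (hb : 0 < b) (v : SPVert a b c) (hv : v ≠ tip₂ hb) :
    ∃ y, (SP a b c).Adj v y ∧ distTip₂ y + 1 = distTip₂ v := by
  rcases v with ⟨g, hg⟩ | ⟨g, hg⟩ | ⟨_ | g, hg⟩ | ⟨_ | g, hg⟩ | ⟨_ | g, hg⟩ | ⟨_ | g, hg⟩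
  · by_cases hg' : g + 1 < 2 * b - 1
    · refine ⟨.p1 ⟨g + 1, hg'⟩, ?_, ?_⟩ <;> grind [adj_iff, SPAdjB, distTip₂]
    · refine ⟨.p2 ⟨g, hg⟩, ?_, ?_⟩ <;> grind [adj_iff, SPAdjB, distTip₂]
  · have : g + 1 < 2 * b - 1 := by simp [tip₂] at hv; omega
    refine ⟨.p2 ⟨g + 1, this⟩, ?_, ?_⟩ <;> grind [adj_iff, SPAdjB, distTip₂]
  · refine ⟨.p2 ⟨0, by omega⟩, ?_, ?_⟩ <;> grind [adj_iff, SPAdjB, distTip₂]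
  · refine ⟨.q1 ⟨g, by omega⟩, ?_, ?_⟩ <;> grind [adj_iff, SPAdjB, distTip₂]
  · refine ⟨.q1 ⟨0, hg⟩, ?_, ?_⟩ <;> grind [adj_iff, SPAdjB, distTip₂]
  · refine ⟨.q2 ⟨g, by omega⟩, ?_, ?_⟩ <;> grind [adj_iff, SPAdjB, distTip₂]
  · refine ⟨.r2 ⟨0, hg⟩, ?_, ?_⟩ <;> grind [adj_iff, SPAdjB, distTip₂]
  · refine ⟨.r1 ⟨g, by omega⟩, ?_, ?_⟩ <;> grind [adj_iff, SPAdjB, distTip₂]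
  · refine ⟨.p1 ⟨0, by omega⟩, ?_, ?_⟩ <;> grind [adj_iff, SPAdjB, distTip₂]
  · refine ⟨.r2 ⟨g, by omega⟩, ?_, ?_⟩ <;> grind [adj_iff, SPAdjB, distTip₂]

theorem exists_adj_distHub_succ (ha : 0 < a) (hc : 0 < c) (v : SPVert a b c) (hv : v ≠ hub ha) :
    ∃ y, (SP a b c).Adj v y ∧ distHub y + 1 = distHub v := by
  rcases v with ⟨_ | g, hg⟩ | ⟨_ | g, hg⟩ | ⟨_ | g, hg⟩ | ⟨_ | g, hg⟩ | ⟨_ | g, hg⟩ | ⟨_ | g, hg⟩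
  · refine ⟨.r2 ⟨0, by omega⟩, ?_, ?_⟩ <;> grind [adj_iff, SPAdjB, distHub]
  · refine ⟨.p1 ⟨g, by omega⟩, ?_, ?_⟩ <;> grind [adj_iff, SPAdjB, distHub]
  · refine ⟨.q1 ⟨0, by omega⟩, ?_, ?_⟩ <;> grind [adj_iff, SPAdjB, distHub]
  · refine ⟨.p2 ⟨g, by omega⟩, ?_, ?_⟩ <;> grind [adj_iff, SPAdjB, distHub]
  · refine ⟨.q2 ⟨0, hg⟩, ?_, ?_⟩ <;> grind [adj_iff, SPAdjB, distHub]
  · refine ⟨.q1 ⟨g, by omega⟩, ?_, ?_⟩ <;> grind [adj_iff, SPAdjB, distHub]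
  · refine ⟨.r1 ⟨0, by omega⟩, ?_, ?_⟩ <;> grind [adj_iff, SPAdjB, distHub]
  · refine ⟨.q2 ⟨g, by omega⟩, ?_, ?_⟩ <;> grind [adj_iff, SPAdjB, distHub]
  · exact absurd rfl hv
  · refine ⟨.r1 ⟨g, by omega⟩, ?_, ?_⟩ <;> grind [adj_iff, SPAdjB, distHub]
  · refine ⟨.r1 ⟨0, hg⟩, ?_, ?_⟩ <;> grind [adj_iff, SPAdjB, distHub]
  · refine ⟨.r2 ⟨g, by omega⟩, ?_, ?_⟩ <;> grind [adj_iff, SPAdjB, distHub]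

theorem dist_tip₁ (hb : 0 < b) (v : SPVert a b c) : (SP a b c).dist v (tip₁ hb) = distTip₁ v :=
  dist_eq_of_potential _ (by simp [tip₁, distTip₁]) (fun _ _ => distTip₁_le_of_adj)
    (exists_adj_distTip₁_succ hb) v

theorem dist_tip₂ (hb : 0 < b) (v : SPVert a b c) : (SP a b c).dist v (tip₂ hb) = distTip₂ v :=
  dist_eq_of_potential _ (by simp [tip₂, distTip₂]) (fun _ _ => distTip₂_le_of_adj)
    (exists_adj_distTip₂_succ hb) v

theorem dist_hub (ha : 0 < a) (hc : 0 < c) (v : SPVert a b c) :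
    (SP a b c).dist v (hub ha) = distHub v :=
  dist_eq_of_potential _ (by simp [hub, distHub]) (fun _ _ => distHub_le_of_adj)
    (exists_adj_distHub_succ ha hc) v

theorem exists_two_adj (ha : 0 < a) (hb : 0 < b) (hc : 0 < c) (v : SPVert a b c) :
    ∃ x y, x ≠ y ∧ (SP a b c).Adj v x ∧ (SP a b c).Adj v y := by
  rcases v with ⟨_ | g, hg⟩ | ⟨_ | g, hg⟩ | ⟨_ | g, hg⟩ | ⟨_ | g, hg⟩ | ⟨_ | g, hg⟩ | ⟨_ | g, hg⟩
  · refine ⟨.r2 ⟨0, by omega⟩, .p2 ⟨0, hg⟩, ?_, ?_, ?_⟩ <;> grind [adj_iff, SPAdjB]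
  · by_cases hg' : g + 2 < 2 * b - 1
    · refine ⟨.p1 ⟨g, by omega⟩, .p1 ⟨g + 2, hg'⟩, ?_, ?_, ?_⟩ <;> grind [adj_iff, SPAdjB]
    · refine ⟨.p1 ⟨g, by omega⟩, .p2 ⟨g + 1, hg⟩, ?_, ?_, ?_⟩ <;> grind [adj_iff, SPAdjB]
  · refine ⟨.q1 ⟨0, by omega⟩, .p1 ⟨0, hg⟩, ?_, ?_, ?_⟩ <;> grind [adj_iff, SPAdjB]
  · by_cases hg' : g + 2 < 2 * b - 1
    · refine ⟨.p2 ⟨g, by omega⟩, .p2 ⟨g + 2, hg'⟩, ?_, ?_, ?_⟩ <;> grind [adj_iff, SPAdjB]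
    · refine ⟨.p2 ⟨g, by omega⟩, .p1 ⟨g + 1, hg⟩, ?_, ?_, ?_⟩ <;> grind [adj_iff, SPAdjB]
  · refine ⟨.p2 ⟨0, by omega⟩, .q2 ⟨0, hg⟩, ?_, ?_, ?_⟩ <;> grind [adj_iff, SPAdjB]
  · by_cases hg' : g + 2 < 2 * c - 1
    · refine ⟨.q1 ⟨g, by omega⟩, .q1 ⟨g + 2, hg'⟩, ?_, ?_, ?_⟩ <;> grind [adj_iff, SPAdjB]
    · refine ⟨.q1 ⟨g, by omega⟩, .q2 ⟨g + 1, hg⟩, ?_, ?_, ?_⟩ <;> grind [adj_iff, SPAdjB]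
  · refine ⟨.r1 ⟨0, by omega⟩, .q1 ⟨0, hg⟩, ?_, ?_, ?_⟩ <;> grind [adj_iff, SPAdjB]
  · by_cases hg' : g + 2 < 2 * c - 1
    · refine ⟨.q2 ⟨g, by omega⟩, .q2 ⟨g + 2, hg'⟩, ?_, ?_, ?_⟩ <;> grind [adj_iff, SPAdjB]
    · refine ⟨.q2 ⟨g, by omega⟩, .q1 ⟨g + 1, hg⟩, ?_, ?_, ?_⟩ <;> grind [adj_iff, SPAdjB]
  · refine ⟨.q2 ⟨0, by omega⟩, .r2 ⟨0, hg⟩, ?_, ?_, ?_⟩ <;> grind [adj_iff, SPAdjB]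
  · by_cases hg' : g + 2 < 2 * a - 1
    · refine ⟨.r1 ⟨g, by omega⟩, .r1 ⟨g + 2, hg'⟩, ?_, ?_, ?_⟩ <;> grind [adj_iff, SPAdjB]
    · refine ⟨.r1 ⟨g, by omega⟩, .r2 ⟨g + 1, hg⟩, ?_, ?_, ?_⟩ <;> grind [adj_iff, SPAdjB]
  · refine ⟨.p1 ⟨0, by omega⟩, .r1 ⟨0, hg⟩, ?_, ?_, ?_⟩ <;> grind [adj_iff, SPAdjB]
  · by_cases hg' : g + 2 < 2 * a - 1
    · refine ⟨.r2 ⟨g, by omega⟩, .r2 ⟨g + 2, hg'⟩, ?_, ?_, ?_⟩ <;> grind [adj_iff, SPAdjB]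
    · refine ⟨.r2 ⟨g, by omega⟩, .r1 ⟨g + 1, hg⟩, ?_, ?_, ?_⟩ <;> grind [adj_iff, SPAdjB]

theorem injective_distTip_distHub (hb : 0 < b) :
    Function.Injective fun v : SPVert a b c => distTip₁ v ::ₘ distTip₂ v ::ₘ {distHub v} := by
  intro u v h
  rw [Multiset.cons_cons_singleton_eq_iff] at h
  cases u <;> cases v <;>
    simp only [distTip₁, distTip₂, distHub, SPVert.p1.injEq, SPVert.p2.injEq, SPVert.q1.injEq,
      SPVert.q2.injEq, SPVert.r1.injEq, SPVert.r2.injEq, reduceCtorEq, Fin.ext_iff] at h ⊢ <;>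
    omega

theorem isMultiResolving_tips_hub (ha : 0 < a) (hb : 0 < b) (hc : 0 < c) :
    IsMultiResolving (SP a b c) {tip₁ hb, tip₂ hb, hub ha} := by
  have h₁ : tip₁ hb ∉ ({tip₂ hb, hub ha} : Finset (SPVert a b c)) := by simp [tip₁, tip₂, hub]
  have h₂ : tip₂ hb ∉ ({hub ha} : Finset (SPVert a b c)) := by simp [tip₂, hub]
  intro u v h
  simp only [multirep_insert _ h₁, multirep_insert _ h₂, multirep_singleton, dist_tip₁,
    dist_tip₂, dist_hub ha hc] at h
  exact injective_distTip_distHub hb h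

end SP

/-- for `a,b,c ≥ 3`, `msdim(SP_{a,b,c}) = 3`. -/
theorem SP_msdim_eq_three (a b c : ℕ) (ha : 3 ≤ a) (hb : 3 ≤ b) (hc : 3 ≤ c) :
    msdim (SP a b c) = 3 := by
  have ha₀ : 0 < a := by omega
  have hb₀ : 0 < b := by omega
  have hc₀ : 0 < c := by omega
  have : Nonempty (SPVert a b c) := ⟨SP.hub ha₀⟩
  refine msdim_eq _ (SP.isMultiResolving_tips_hub ha₀ hb₀ hc₀) ?_ fun U hU =>
    three_le_card_of_isMultiResolving _ (SP.exists_two_adj ha₀ hb₀ hc₀) hU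
  simp [SP.tip₁, SP.tip₂, SP.hub]
end
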